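/- arXiv:2410.20865 — 4 statements merged into one kernel-verified Lean document; each statement's English description precedes it below -/
import Mathlib

section
/- If H = n - o(n) honest nodes each independently choose a uniformly random rank in {1,...,n}, then for all sufficiently large n, with high probability at least n/8 ranks are chosen by exactly one honest node. -/
/-!
Think of the honest nodes as balls thrown into `n` bins. Counting balls bin by bin gives
`#singletons ≥ 2n - 2·#empty - H ≥ n - 2·#empty`, so it suffices that at most `7n/16` bins stay
empty. For `c ≥ 0`, `(1 + c)^#empty` is the sum of `c^#S` over the sets `S` of empty bins, and a
fixed `S` is empty with probability `(1 - #S/n)^H ≤ (e^{-H/n})^#S`; hence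
`E[(1 + c)^#empty] ≤ (1 + c e^{-H/n})^n`, and Markov's inequality bounds the tail of `#empty`.
With `c = 1/4` and `H ≥ 19n/20` this tail is at most `((11/10) / (5/4)^{7/16})^n ≤ 1/n`.
-/

open MeasureTheory ProbabilityTheory Filter Finset Real
open scoped ENNReal

section Counting

variable {ι β : Type*} [Fintype ι] [Fintype β] [DecidableEq β]

def emptyBins (f : ι → β) : Finset β := {b | ∀ j, f j ≠ b}

def singletonBins (f : ι → β) : Finset β := {b | #{j | f j = b} = 1}

theorem two_mul_card_le_card_singletonBins (f : ι → β) :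
    2 * Fintype.card β ≤ #(singletonBins f) + 2 * #(emptyBins f) + Fintype.card ι := by
  have hempty (b : β) : (∀ j, f j ≠ b) ↔ #{j | f j = b} = 0 := by
    simp [filter_eq_empty_iff]
  calc 2 * Fintype.card β = ∑ _ : β, 2 := by simp [mul_comm]
    _ ≤ ∑ b, ((if #{j | f j = b} = 1 then 1 else 0) + 2 * (if ∀ j, f j ≠ b then 1 else 0)
          + #{j | f j = b}) :=
        sum_le_sum fun b _ => by simp only [hempty]; split_ifs <;> omega
    _ = _ := by
        rw [sum_add_distrib, sum_add_distrib, ← mul_sum, ← card_filter, ← card_filter,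
          ← card_univ, card_eq_sum_card_fiberwise fun j _ => mem_univ (f j)]
        rfl

theorem card_div_eight_le_card_singletonBins (f : ι → β)
    (hcard : Fintype.card ι ≤ Fintype.card β)
    (hempty : (#(emptyBins f) : ℝ) < 7 * Fintype.card β / 16) :
    (Fintype.card β : ℝ) / 8 ≤ #(singletonBins f) := by
  have hcount : 2 * (Fintype.card β : ℝ) ≤ #(singletonBins f) + 2 * #(emptyBins f)
      + Fintype.card ι := by
    exact_mod_cast two_mul_card_le_card_singletonBins f
  have hcard' : (Fintype.card ι : ℝ) ≤ Fintype.card β := by exact_mod_cast hcard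
  linarith

theorem one_add_pow_card_eq_sum {R : Type*} [CommSemiring R] (c : R) (s : Finset β) :
    (1 + c) ^ #s = ∑ S : Finset β, if S ⊆ s then c ^ #S else 0 := by
  rw [← sum_filter, add_comm, ← sum_pow_mul_eq_add_pow c 1 s]
  simp only [one_pow, mul_one]
  congr 1
  ext S
  simp

theorem setOf_subset_emptyBins {Ω : Type*} (R : ι → Ω → β) (S : Finset β) :
    {ω | S ⊆ emptyBins (R · ω)} = ⋂ j, R j ⁻¹' (↑S)ᶜ := by
  ext ω
  simp only [emptyBins, Set.mem_ofPred_eq, subset_iff, mem_filter, mem_univ, true_and,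
    Set.mem_iInter, Set.mem_preimage, Set.mem_compl_iff, mem_coe]
  exact ⟨fun h j hj => h hj j rfl, fun h b hb j hjb => h j (hjb ▸ hb)⟩

end Counting

theorem cast_sub_div_pow_le_exp_pow {n k : ℕ} (hn : 0 < n) (hk : k ≤ n) (m : ℕ) :
    (((n - k : ℕ) : ℝ) / n) ^ m ≤ exp (-(m / n)) ^ k := by
  have hsub : ((n - k : ℕ) : ℝ) / n = 1 - k / n := by
    rw [Nat.cast_sub hk]; field_simp
  have hnonneg : 0 ≤ 1 - (k : ℝ) / n := by
    rw [← hsub]; positivity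
  calc (((n - k : ℕ) : ℝ) / n) ^ m = (1 - k / n) ^ m := by rw [hsub]
    _ ≤ exp (-(k / n)) ^ m := pow_le_pow_left₀ hnonneg (one_sub_le_exp_neg _) m
    _ = exp (-(m / n)) ^ k := by rw [← exp_nat_mul, ← exp_nat_mul]; ring_nf

section Probability

variable {ι β Ω : Type*} [Fintype ι] [Fintype β] [MeasurableSpace β] [MeasurableSingletonClass β]
  [MeasurableSpace Ω] {μ : Measure Ω} {R : ι → Ω → β}

theorem measurable_comp_pi {α : Type*} [MeasurableSpace α] (hR : ∀ j, Measurable (R j))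
    (g : (ι → β) → α) : Measurable fun ω => g (R · ω) :=
  Measurable.of_discrete.comp (measurable_pi_lambda _ hR)

theorem measure_preimage_eq_card_div {X : Ω → β} (hX : Measurable X)
    (hunif : ∀ b, μ {ω | X ω = b} = 1 / Fintype.card β) (T : Finset β) :
    μ (X ⁻¹' T) = #T / Fintype.card β := by
  rw [← sum_measure_preimage_singleton T fun b _ => hX (measurableSet_singleton b)]
  simp only [Set.preimage, Set.mem_singleton_iff, hunif, sum_const, nsmul_eq_mul]
  rw [mul_one_div]

variable [DecidableEq β] [Nonempty β] (hR : ∀ j, Measurable (R j)) (hind : iIndepFun R μ)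
  (hunif : ∀ j b, μ {ω | R j ω = b} = 1 / Fintype.card β)
include hR hind hunif

theorem measure_subset_emptyBins_le (S : Finset β) :
    μ {ω | S ⊆ emptyBins (R · ω)} ≤
      ENNReal.ofReal (exp (-(Fintype.card ι / Fintype.card β))) ^ #S := by
  have hcard : 0 < Fintype.card β := Fintype.card_pos
  rw [setOf_subset_emptyBins, hind.meas_iInter fun j => ⟨_, .of_discrete, rfl⟩]
  simp_rw [← coe_compl, measure_preimage_eq_card_div (hR _) (hunif _), prod_const, card_univ,
    card_compl]
  rw [← ENNReal.ofReal_natCast, ← ENNReal.ofReal_natCast (Fintype.card β),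
    ← ENNReal.ofReal_div_of_pos (by exact_mod_cast hcard), ← ENNReal.ofReal_pow (by positivity),
    ← ENNReal.ofReal_pow (exp_pos _).le]
  exact ENNReal.ofReal_le_ofReal (cast_sub_div_pow_le_exp_pow hcard (card_le_univ S) _)

theorem lintegral_one_add_pow_card_emptyBins_le (c : ℝ≥0∞) :
    ∫⁻ ω, (1 + c) ^ #(emptyBins (R · ω)) ∂μ ≤
      (1 + c * ENNReal.ofReal (exp (-(Fintype.card ι / Fintype.card β)))) ^ Fintype.card β := by
  set q := ENNReal.ofReal (exp (-(Fintype.card ι / Fintype.card β)))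
  have hterm (S : Finset β) :
      ∫⁻ ω, (if S ⊆ emptyBins (R · ω) then c ^ #S else 0) ∂μ
        = c ^ #S * μ {ω | S ⊆ emptyBins (R · ω)} := by
    rw [← lintegral_indicator_const
      (measurableSet_setOfPred.mpr (measurable_comp_pi hR (S ⊆ emptyBins ·)))]
    congr with ω
    simp [Set.indicator_apply]
  simp_rw [one_add_pow_card_eq_sum c]
  rw [lintegral_finsetSum _ fun S _ =>
    measurable_comp_pi hR fun v => if S ⊆ emptyBins v then c ^ #S else 0]
  calc ∑ S, ∫⁻ ω, (if S ⊆ emptyBins (R · ω) then c ^ #S else 0) ∂μ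
      ≤ ∑ S : Finset β, c ^ #S * q ^ #S := by
        simp_rw [hterm]
        gcongr with S
        exact measure_subset_emptyBins_le hR hind hunif S
    _ = (1 + c * q) ^ Fintype.card β := by
        simp [← card_univ, one_add_pow_card_eq_sum, mul_pow]

theorem measure_le_card_emptyBins_le {c : ℝ} (hc : 0 ≤ c) (t : ℕ) :
    μ {ω | t ≤ #(emptyBins (R · ω))} ≤ ENNReal.ofReal
      ((1 + c * exp (-(Fintype.card ι / Fintype.card β))) ^ Fintype.card β / (1 + c) ^ t) := by
  set C := ENNReal.ofReal c
  have hmarkov : (1 + C) ^ t * μ {ω | t ≤ #(emptyBins (R · ω))} ≤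
      (1 + C * ENNReal.ofReal (exp (-(Fintype.card ι / Fintype.card β)))) ^ Fintype.card β :=
    calc (1 + C) ^ t * μ {ω | t ≤ #(emptyBins (R · ω))}
        ≤ (1 + C) ^ t * μ {ω | (1 + C) ^ t ≤ (1 + C) ^ #(emptyBins (R · ω))} := by
          gcongr with ω
          exact fun h => pow_le_pow_right₀ le_self_add h
      _ ≤ ∫⁻ ω, (1 + C) ^ #(emptyBins (R · ω)) ∂μ :=
          mul_meas_ge_le_lintegral₀
            (measurable_comp_pi hR fun v => (1 + C) ^ #(emptyBins v)).aemeasurable _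
      _ ≤ _ := lintegral_one_add_pow_card_emptyBins_le hR hind hunif C
  rw [ENNReal.ofReal_div_of_pos (by positivity),
    ENNReal.le_div_iff_mul_le (Or.inl (by positivity)) (Or.inl ENNReal.ofReal_ne_top), mul_comm]
  rwa [ENNReal.ofReal_pow (by positivity), ENNReal.ofReal_pow (by positivity),
    ENNReal.ofReal_add zero_le_one hc, ENNReal.ofReal_add zero_le_one (by positivity),
    ENNReal.ofReal_mul hc, ENNReal.ofReal_one]

end Probability

theorem exp_neg_nineteen_div_twenty_le : exp (-(19 / 20)) ≤ 2 / 5 := by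
  have h := sum_le_exp_of_nonneg (x := 19 / 20) (by norm_num) 4
  norm_num [sum_range_succ, Nat.factorial] at h
  rw [exp_neg, inv_le_comm₀ (exp_pos _) (by norm_num)]
  linarith

theorem eventually_tail_bound_le_inv :
    ∀ᶠ n : ℕ in atTop, ∀ m t : ℕ, 19 / 20 * (n : ℝ) ≤ m → 7 * (n : ℝ) / 16 ≤ t →
      (1 + 1 / 4 * exp (-(m / n))) ^ n / (1 + 1 / 4) ^ t ≤ 1 / n := by
  set r : ℝ := (5 / 4) ^ (7 / 16 : ℝ)
  have hr16 : r ^ 16 = (5 / 4) ^ 7 := by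
    rw [← rpow_natCast, ← rpow_mul (by norm_num)]; norm_num
  have hr : 11 / 10 < r := by
    rw [← pow_lt_pow_iff_left₀ (by norm_num) (by positivity) (by norm_num : 16 ≠ 0), hr16]
    norm_num
  have hρ : Tendsto (fun n : ℕ => n * (11 / 10 / r) ^ n) atTop (nhds 0) :=
    tendsto_self_mul_const_pow_of_lt_one (by positivity) ((div_lt_one (by linarith)).mpr hr)
  filter_upwards [hρ.eventually_le_const zero_lt_one, eventually_gt_atTop 0]
    with n hn hpos m t hm ht
  have hn' : (0 : ℝ) < n := by exact_mod_cast hpos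
  have hexp : exp (-(m / n)) ≤ 2 / 5 := by
    refine le_trans (exp_le_exp.mpr ?_) exp_neg_nineteen_div_twenty_le
    rw [neg_le_neg_iff, le_div_iff₀ hn']
    exact hm
  have hpow : r ^ n ≤ (1 + 1 / 4) ^ t :=
    calc r ^ n = (5 / 4 : ℝ) ^ ((7 / 16 : ℝ) * n) := by
          rw [← rpow_natCast, ← rpow_mul (by norm_num)]
      _ ≤ (5 / 4 : ℝ) ^ (t : ℝ) := rpow_le_rpow_of_exponent_le (by norm_num) (by linarith)
      _ = (1 + 1 / 4) ^ t := by norm_num [rpow_natCast]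
  calc (1 + 1 / 4 * exp (-(m / n))) ^ n / (1 + 1 / 4) ^ t
      ≤ (11 / 10) ^ n / r ^ n := by
        gcongr
        linarith
    _ = (11 / 10 / r) ^ n := (div_pow _ _ _).symm
    _ ≤ 1 / n := by rw [le_div_iff₀ hn', mul_comm]; exact hn

theorem stmt_5 (H : ℕ → ℕ) (hHle : ∀ n, H n ≤ n)
    (hH : (fun n : ℕ => (n : ℝ) - H n) =o[atTop] (fun n : ℕ => (n : ℝ))) :
    ∃ c : ℝ, 1 ≤ c ∧ ∀ᶠ n : ℕ in atTop,
      ∀ (Ω : Type) (_ : MeasureSpace Ω), IsProbabilityMeasure (ℙ : Measure Ω) →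
      ∀ R : Fin (H n) → Ω → Fin n, (∀ j, Measurable (R j)) →
        iIndepFun R ℙ →
        (∀ j i, ℙ {ω | R j ω = i} = 1 / n) →
        1 - ENNReal.ofReal (1 / (n : ℝ) ^ c) ≤
          ℙ {ω | (n : ℝ) / 8 ≤ ((Finset.univ.filter (fun i : Fin n =>
              (Finset.univ.filter (fun j => R j ω = i)).card = 1)).card : ℝ)} := by
  refine ⟨1, le_rfl, ?_⟩
  have hHlarge : ∀ᶠ n : ℕ in atTop, 19 / 20 * (n : ℝ) ≤ H n := by
    filter_upwards [hH.def (by norm_num : (0 : ℝ) < 1 / 20)] with n hn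
    rw [Real.norm_natCast, Real.norm_eq_abs] at hn
    linarith [le_abs_self ((n : ℝ) - H n)]
  filter_upwards [hHlarge, eventually_tail_bound_le_inv, eventually_gt_atTop 0]
    with n hHn htail hn Ω _ _ R hR hind hunif
  have : Nonempty (Fin n) := ⟨⟨0, hn⟩⟩
  set t := ⌈7 * (n : ℝ) / 16⌉₊
  have hbad : ℙ {ω | t ≤ #(emptyBins (R · ω))} ≤ ENNReal.ofReal (1 / n) := by
    refine (measure_le_card_emptyBins_le hR hind (by simpa using hunif) (c := 1 / 4)
      (by norm_num) t).trans (ENNReal.ofReal_le_ofReal ?_)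
    simpa using htail (H n) t hHn (Nat.le_ceil _)
  have hgood :
      {ω | t ≤ #(emptyBins (R · ω))}ᶜ ⊆ {ω | (n : ℝ) / 8 ≤ #(singletonBins (R · ω))} := by
    intro ω hω
    rw [Set.mem_compl_iff, Set.mem_ofPred_eq, not_le, Nat.lt_ceil] at hω
    simpa using card_div_eight_le_card_singletonBins (R · ω) (by simpa using hHle n)
      (by simpa using hω)
  calc 1 - ENNReal.ofReal (1 / (n : ℝ) ^ (1 : ℝ))
      ≤ 1 - ℙ {ω | t ≤ #(emptyBins (R · ω))} := by rw [rpow_one]; exact tsub_le_tsub_left hbad 1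
    _ = ℙ {ω | t ≤ #(emptyBins (R · ω))}ᶜ :=
        (prob_compl_eq_one_sub (measurableSet_setOfPred.mpr
          (measurable_comp_pi hR fun v => t ≤ #(emptyBins v)))).symm
    _ ≤ _ := measure_mono hgood
end

section
/- If f is the fraction of honest nodes holding a vote m, each honest node sends out total = Θ(log³n) tokens whose walks, when good, end at each fixed core node with probability between 1/|C| - 1/n³ and (1+o(1))/|C| + 1/n³, and at least (f ± o(1))·|C|·total of the tokens carrying vote m are good, then the expected number of good tokens carrying vote m received by any fixed core node u is (f ± o(1))·total, and with high probability u receives (f ± o(1))·total good tokens carrying vote m. -/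
open MeasureTheory ProbabilityTheory
open scoped ENNReal

/-!
The number of good tokens with vote `m` that reach `u` is a sum of independent indicators whose
success probabilities are all close to `1 / |C|`. Its mean is therefore close to `N / |C|`, which
the bounds on the number `N` of such tokens place at `f · total`. Concentration is the
multiplicative Chernoff bound: the moment generating function of the sum is at most
`exp (μ (eᵗ - 1))`, and Markov's inequality is applied with `t = log (1 + δ)` for the upper tail
and `t = -δ` for the lower tail.
-/

namespace Real

theorem two_mul_div_two_add_le_log_one_add {x : ℝ} (hx : 0 ≤ x) :
    2 * x / (2 + x) ≤ log (1 + x) := by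
  rcases hx.eq_or_lt with rfl | hx
  · simp
  -- `2x / (2 + x)` is the first term of the series
  -- `log (1 + x) = 2 ∑ₖ (x / (2 + x)) ^ (2k + 1) / (2k + 1)`
  have h := hasSum_log_one_add_inv (inv_pos.mpr hx)
  rw [inv_inv] at h
  refine (le_hasSum h 0 fun k _ => by positivity).trans_eq' ?_
  have : 2 + x ≠ 0 := by positivity
  norm_num
  field_simp

theorem exp_neg_le_one_sub_add_sq {x : ℝ} (hx : 0 ≤ x) :
    exp (-x) ≤ 1 - x + 2 * x ^ 2 / 3 := by
  have hq : 0 ≤ 1 - x + 2 * x ^ 2 / 3 := by nlinarith [sq_nonneg (x - 3 / 4)]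
  rw [exp_neg, inv_le_iff_one_le_mul₀ (exp_pos x)]
  -- the product expands to `1 + x ^ 2 / 6 + x ^ 3 / 6 + x ^ 4 / 3`
  calc (1 : ℝ) ≤ (1 - x + 2 * x ^ 2 / 3) * (1 + x + x ^ 2 / 2) := by
        nlinarith [pow_nonneg hx 3, pow_nonneg hx 4]
    _ ≤ (1 - x + 2 * x ^ 2 / 3) * exp x := by gcongr; exact quadratic_le_exp_of_nonneg hx

end Real

namespace ProbabilityTheory

theorem exp_mul_indicator_one {Ω : Type*} (s : Set Ω) (t : ℝ) :
    (fun ω => Real.exp (t * s.indicator (fun _ => (1 : ℝ)) ω)) =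
      fun ω => s.indicator (fun _ => Real.exp t - 1) ω + 1 := by
  funext ω
  by_cases h : ω ∈ s <;> simp [h]

section IndicatorMGF

variable {Ω : Type*} [MeasurableSpace Ω] {μ : Measure Ω}

theorem integrable_exp_mul_indicator_one [IsFiniteMeasure μ] {s : Set Ω} (hs : MeasurableSet s)
    (t : ℝ) : Integrable (fun ω => Real.exp (t * s.indicator (fun _ => (1 : ℝ)) ω)) μ := by
  rw [exp_mul_indicator_one]
  exact ((integrable_const _).indicator hs).add (integrable_const 1)

theorem mgf_indicator_one [IsProbabilityMeasure μ] {s : Set Ω} (hs : MeasurableSet s) (t : ℝ) :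
    mgf (s.indicator fun _ => (1 : ℝ)) μ t = 1 + μ.real s * (Real.exp t - 1) := by
  rw [mgf, exp_mul_indicator_one,
    integral_add ((integrable_const _).indicator hs) (integrable_const 1),
    integral_indicator_const _ hs, integral_const]
  simp only [smul_eq_mul, probReal_univ, mul_one]
  ring

theorem mgf_indicator_one_le_exp [IsProbabilityMeasure μ] {s : Set Ω} (hs : MeasurableSet s)
    (t : ℝ) :
    mgf (s.indicator fun _ => (1 : ℝ)) μ t ≤ Real.exp (μ.real s * (Real.exp t - 1)) := by
  rw [mgf_indicator_one hs]
  linarith [Real.add_one_le_exp (μ.real s * (Real.exp t - 1))]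

end IndicatorMGF

section Chernoff

variable {Ω ι : Type*} [MeasurableSpace Ω] {μ : Measure Ω} [IsProbabilityMeasure μ]
  [Fintype ι] {s : ι → Set Ω}

theorem iIndepSet.mgf_sum_indicator_one_le (hs : ∀ i, MeasurableSet (s i))
    (hind : iIndepSet s μ) (t : ℝ) :
    mgf (∑ i, (s i).indicator fun _ => (1 : ℝ)) μ t ≤
      Real.exp ((∑ i, μ.real (s i)) * (Real.exp t - 1)) := by
  rw [hind.iIndepFun_indicator.mgf_sum (fun i => measurable_const.indicator (hs i)),
    Finset.sum_mul, Real.exp_sum]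
  refine Finset.prod_le_prod (fun i _ => ?_) fun i _ => mgf_indicator_one_le_exp (hs i) t
  rw [mgf_indicator_one (hs i)]
  nlinarith [Real.exp_pos t, measureReal_nonneg (μ := μ) (s := s i),
    measureReal_le_one (μ := μ) (s := s i)]

theorem iIndepSet.integrable_exp_mul_sum_indicator_one (hs : ∀ i, MeasurableSet (s i))
    (hind : iIndepSet s μ) (t : ℝ) :
    Integrable (fun ω => Real.exp (t * (∑ i, (s i).indicator fun _ => (1 : ℝ)) ω)) μ :=
  hind.iIndepFun_indicator.integrable_exp_mul_sum (fun i => measurable_const.indicator (hs i))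
    fun i _ => integrable_exp_mul_indicator_one (hs i) t

theorem iIndepSet.measureReal_sum_indicator_one_ge_le (hs : ∀ i, MeasurableSet (s i))
    (hind : iIndepSet s μ) {δ : ℝ} (hδ0 : 0 ≤ δ) (hδ1 : δ ≤ 1) :
    μ.real {ω | (1 + δ) * ∑ i, μ.real (s i) ≤
        (∑ i, (s i).indicator fun _ => (1 : ℝ)) ω} ≤
      Real.exp (-(∑ i, μ.real (s i)) * δ ^ 2 / 3) := by
  set m := ∑ i, μ.real (s i)
  have hm : 0 ≤ m := Finset.sum_nonneg fun i _ => measureReal_nonneg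
  set t := Real.log (1 + δ)
  have het : Real.exp t = 1 + δ := Real.exp_log (by linarith)
  have hlog := Real.two_mul_div_two_add_le_log_one_add hδ0
  rw [div_le_iff₀ (by linarith)] at hlog
  calc _ ≤ Real.exp (-t * ((1 + δ) * m)) * mgf _ μ t :=
        measure_ge_le_exp_mul_mgf _ (Real.log_nonneg (by linarith))
          (hind.integrable_exp_mul_sum_indicator_one hs t)
    _ ≤ Real.exp (-t * ((1 + δ) * m)) * Real.exp (m * (Real.exp t - 1)) := by
        gcongr; exact hind.mgf_sum_indicator_one_le hs t
    _ = Real.exp (m * (δ - (1 + δ) * t)) := by rw [← Real.exp_add, het]; ring_nf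
    _ ≤ Real.exp (-m * δ ^ 2 / 3) := by
        rw [Real.exp_le_exp]
        have key : δ - (1 + δ) * t ≤ -δ ^ 2 / 3 := by nlinarith
        nlinarith [mul_le_mul_of_nonneg_left key hm]

theorem iIndepSet.measureReal_sum_indicator_one_le_le (hs : ∀ i, MeasurableSet (s i))
    (hind : iIndepSet s μ) {δ : ℝ} (hδ0 : 0 ≤ δ) :
    μ.real {ω | (∑ i, (s i).indicator fun _ => (1 : ℝ)) ω ≤
        (1 - δ) * ∑ i, μ.real (s i)} ≤
      Real.exp (-(∑ i, μ.real (s i)) * δ ^ 2 / 3) := by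
  set m := ∑ i, μ.real (s i)
  have hm : 0 ≤ m := Finset.sum_nonneg fun i _ => measureReal_nonneg
  -- `t = -δ` instead of the optimal `log (1 - δ)`, which would need `δ < 1`
  calc _ ≤ Real.exp (-(-δ) * ((1 - δ) * m)) * mgf _ μ (-δ) :=
        measure_le_le_exp_mul_mgf _ (by linarith) (hind.integrable_exp_mul_sum_indicator_one hs _)
    _ ≤ Real.exp (-(-δ) * ((1 - δ) * m)) * Real.exp (m * (Real.exp (-δ) - 1)) := by
        gcongr; exact hind.mgf_sum_indicator_one_le hs _
    _ = Real.exp (m * (Real.exp (-δ) - 1 + δ - δ ^ 2)) := by rw [← Real.exp_add]; ring_nf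
    _ ≤ Real.exp (-m * δ ^ 2 / 3) := by
        rw [Real.exp_le_exp]
        nlinarith [mul_le_mul_of_nonneg_left (Real.exp_neg_le_one_sub_add_sq hδ0) hm]

theorem iIndepSet.measure_abs_sum_indicator_one_sub_ge_le (hs : ∀ i, MeasurableSet (s i))
    (hind : iIndepSet s μ) {δ : ℝ} (hδ0 : 0 ≤ δ) (hδ1 : δ ≤ 1) :
    μ {ω | δ * ∑ i, μ.real (s i) ≤
        |(∑ i, (s i).indicator fun _ => (1 : ℝ)) ω - ∑ i, μ.real (s i)|} ≤
      ENNReal.ofReal (2 * Real.exp (-(∑ i, μ.real (s i)) * δ ^ 2 / 3)) := by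
  set S := ∑ i, (s i).indicator fun _ => (1 : ℝ)
  set m := ∑ i, μ.real (s i)
  have hsplit :
      {ω | δ * m ≤ |S ω - m|} ⊆ {ω | (1 + δ) * m ≤ S ω} ∪ {ω | S ω ≤ (1 - δ) * m} := by
    intro ω (h : δ * m ≤ |S ω - m|)
    rcases le_abs.mp h with h | h
    exacts [.inl (show (1 + δ) * m ≤ S ω by linarith),
      .inr (show S ω ≤ (1 - δ) * m by linarith)]
  refine (measure_mono hsplit).trans ((measure_union_le _ _).trans ?_)
  rw [two_mul, ENNReal.ofReal_add (by positivity) (by positivity)]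
  gcongr <;> rw [← ofReal_measureReal]
  · exact ENNReal.ofReal_le_ofReal (hind.measureReal_sum_indicator_one_ge_le hs hδ0 hδ1)
  · exact ENNReal.ofReal_le_ofReal (hind.measureReal_sum_indicator_one_le_le hs hδ0)

end Chernoff

end ProbabilityTheory

section Counting

variable {Ω ι : Type*} [Fintype ι]

theorem natCast_card_filter_mem_eq_sum_indicator (s : ι → Set Ω) (ω : Ω)
    [DecidablePred fun j => ω ∈ s j] :
    ((Finset.univ.filter fun j => ω ∈ s j).card : ℝ) =
      (∑ j, (s j).indicator fun _ => (1 : ℝ)) ω := by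
  rw [Finset.natCast_card_filter, Finset.sum_apply]
  exact Finset.sum_congr rfl fun j _ => by by_cases h : ω ∈ s j <;> simp [h]

theorem integral_sum_indicator_one [MeasurableSpace Ω] {μ : Measure Ω} [IsFiniteMeasure μ]
    {s : ι → Set Ω} (hs : ∀ j, MeasurableSet (s j)) :
    ∫ ω, (∑ j, (s j).indicator fun _ => (1 : ℝ)) ω ∂μ = ∑ j, μ.real (s j) := by
  simp only [Finset.sum_apply]
  rw [integral_finsetSum _ fun j _ => (integrable_const (1 : ℝ)).indicator (hs j)]
  exact Finset.sum_congr rfl fun j _ => integral_indicator_one (hs j)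

end Counting

section NearUniform

variable {ι : Type*} [Fintype ι] {p : ι → ℝ} {C T f ε η : ℝ}

theorem card_le_two_mul_of_le (hC : 0 < C) (hT : 0 ≤ T) (hf : f ≤ 1) (hε : ε ≤ 1)
    (hN : (Fintype.card ι : ℝ) ≤ (f + ε) * C * T) : (Fintype.card ι : ℝ) ≤ 2 * C * T :=
  hN.trans (mul_le_mul_of_nonneg_right (mul_le_mul_of_nonneg_right (by linarith) hC.le) hT)

theorem sub_mul_le_sum_of_near_uniform (hC : 0 < C) (hT : 0 ≤ T) (hf : f ≤ 1) (hε0 : 0 ≤ ε)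
    (hε1 : ε ≤ 1) (hη : 0 ≤ η) (hN_lb : (f - ε) * C * T ≤ Fintype.card ι)
    (hN_ub : (Fintype.card ι : ℝ) ≤ (f + ε) * C * T) (hp : ∀ j, 1 / C - η ≤ p j) :
    (f - (3 * ε + 2 * C * η)) * T ≤ ∑ j, p j := by
  set N : ℝ := (Fintype.card ι : ℝ)
  have hN_div : (f - ε) * T ≤ N / C := by rw [le_div_iff₀ hC]; linarith
  have hNη : N * η ≤ 2 * C * T * η :=
    mul_le_mul_of_nonneg_right (card_le_two_mul_of_le hC hT hf hε1 hN_ub) hη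
  calc (f - (3 * ε + 2 * C * η)) * T ≤ N * (1 / C - η) := by
        rw [mul_sub, mul_one_div]; nlinarith [mul_nonneg hε0 hT]
    _ ≤ ∑ j, p j := by
        simpa using Finset.card_nsmul_le_sum Finset.univ p _ fun j _ => hp j

theorem sum_le_add_mul_of_near_uniform (hC : 0 < C) (hT : 0 ≤ T) (hf : f ≤ 1) (hε0 : 0 ≤ ε)
    (hε1 : ε ≤ 1) (hη : 0 ≤ η) (hN_ub : (Fintype.card ι : ℝ) ≤ (f + ε) * C * T)
    (hp : ∀ j, p j ≤ (1 + ε) / C + η) :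
    ∑ j, p j ≤ (f + (3 * ε + 2 * C * η)) * T := by
  set N : ℝ := (Fintype.card ι : ℝ)
  have hN_div : N / C ≤ (f + ε) * T := by rw [div_le_iff₀ hC]; linarith
  have hNη : N * η ≤ 2 * C * T * η :=
    mul_le_mul_of_nonneg_right (card_le_two_mul_of_le hC hT hf hε1 hN_ub) hη
  calc ∑ j, p j ≤ N * ((1 + ε) / C + η) := by
        simpa [N, mul_add] using Finset.sum_le_card_nsmul Finset.univ p _ fun j _ => hp j
    _ = (1 + ε) * (N / C) + N * η := by ring
    _ ≤ (1 + ε) * ((f + ε) * T) + 2 * C * T * η := by gcongr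
    _ ≤ (f + (3 * ε + 2 * C * η)) * T := by nlinarith [mul_nonneg hε0 hT, mul_nonneg hε0 hε0]

end NearUniform

open Classical in
theorem stmt_14_general {Ω : Type*} [MeasureSpace Ω] [IsProbabilityMeasure (ℙ : Measure Ω)]
    (n : ℕ)
    (Cc T f ε : ℝ) (hCc : 0 < Cc) (hCcn : Cc ≤ n) (hT : 1 ≤ T)
    (hf1 : f ≤ 1) (hε0 : 0 ≤ ε) (hε1 : ε ≤ 1)
    (N : ℕ) (hNlb : (f - ε) * Cc * T ≤ N) (hNub : (N : ℝ) ≤ (f + ε) * Cc * T)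
    (p : Fin N → ℝ)
    (hp : ∀ j, 1 / Cc - 1 / (n : ℝ) ^ 3 ≤ p j ∧ p j ≤ (1 + ε) / Cc + 1 / (n : ℝ) ^ 3)
    (ξ : Fin N → Ω → Prop) (hmeas : ∀ j, MeasurableSet {ω | ξ j ω})
    (hindep : iIndepSet (fun j => {ω | ξ j ω}) ℙ)
    (hdist : ∀ j, ℙ {ω | ξ j ω} = ENNReal.ofReal (p j))
    (εout : ℝ) (hεout : εout = 3 * ε + 2 * Cc / (n : ℝ) ^ 3) :
    ((f - εout) * T ≤ ∫ ω, ((Finset.univ.filter (fun j => ξ j ω)).card : ℝ)) ∧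
    ((∫ ω, ((Finset.univ.filter (fun j => ξ j ω)).card : ℝ)) ≤ (f + εout) * T) ∧
    (∀ δ' : ℝ, 0 < δ' → δ' ≤ 1 →
      ℙ {ω | δ' * (∫ ω', ((Finset.univ.filter (fun j => ξ j ω')).card : ℝ)) ≤
            |((Finset.univ.filter (fun j => ξ j ω)).card : ℝ) -
              ∫ ω', ((Finset.univ.filter (fun j => ξ j ω')).card : ℝ)|} ≤
        ENNReal.ofReal (2 * Real.exp
          (-(∫ ω', ((Finset.univ.filter (fun j => ξ j ω')).card : ℝ)) * δ' ^ 2 / 3))) := by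
  have hn : (1 : ℝ) ≤ n := Nat.one_le_cast.mpr (Nat.cast_pos.mp (hCc.trans_le hCcn))
  have hp0 : ∀ j, 0 ≤ p j := fun j => by
    have : 1 / (n : ℝ) ^ 3 ≤ 1 / Cc :=
      one_div_le_one_div_of_le hCc (hCcn.trans (le_self_pow₀ hn (by norm_num)))
    linarith [(hp j).1]
  have hcount : ∀ ω, ((Finset.univ.filter fun j => ξ j ω).card : ℝ) =
      (∑ j, {ω | ξ j ω}.indicator fun _ => (1 : ℝ)) ω :=
    fun ω => natCast_card_filter_mem_eq_sum_indicator _ ω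
  have hprob : ∀ j, (ℙ : Measure Ω).real {ω | ξ j ω} = p j := fun j => by
    rw [measureReal_def, hdist, ENNReal.toReal_ofReal (hp0 j)]
  simp only [hcount, integral_sum_indicator_one hmeas]
  have hη : 2 * Cc / (n : ℝ) ^ 3 = 2 * Cc * (1 / (n : ℝ) ^ 3) := by ring
  refine ⟨?_, ?_, fun δ hδ0 hδ1 => ?_⟩
  · simp only [hprob, hεout, hη]
    exact sub_mul_le_sum_of_near_uniform hCc (by linarith) hf1 hε0 hε1 (by positivity)
      (by simpa using hNlb) (by simpa using hNub) fun j => (hp j).1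
  · simp only [hprob, hεout, hη]
    exact sum_le_add_mul_of_near_uniform hCc (by linarith) hf1 hε0 hε1 (by positivity)
      (by simpa using hNub) fun j => (hp j).2
  · exact hindep.measure_abs_sum_indicator_one_sub_ge_le hmeas hδ0.le hδ1

open Classical in
theorem stmt_14 {Ω : Type*} [MeasureSpace Ω] [IsProbabilityMeasure (ℙ : Measure Ω)]
    (n : ℕ) (hn : 0 < n)
    (Cc T f ε : ℝ) (hCc : 0 < Cc) (hCcn : Cc ≤ n) (hT : 1 ≤ T)
    (hf0 : 0 ≤ f) (hf1 : f ≤ 1) (hε0 : 0 ≤ ε) (hε1 : ε ≤ 1)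
    (N : ℕ) (hNlb : (f - ε) * Cc * T ≤ N) (hNub : (N : ℝ) ≤ (f + ε) * Cc * T)
    (p : Fin N → ℝ)
    (hp : ∀ j, 1 / Cc - 1 / (n : ℝ) ^ 3 ≤ p j ∧ p j ≤ (1 + ε) / Cc + 1 / (n : ℝ) ^ 3)
    (ξ : Fin N → Ω → Prop) (hmeas : ∀ j, MeasurableSet {ω | ξ j ω})
    (hindep : iIndepSet (fun j => {ω | ξ j ω}) ℙ)
    (hdist : ∀ j, ℙ {ω | ξ j ω} = ENNReal.ofReal (p j))
    (εout : ℝ) (hεout : εout = 3 * ε + 2 * Cc / (n : ℝ) ^ 3) :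
    ((f - εout) * T ≤ ∫ ω, ((Finset.univ.filter (fun j => ξ j ω)).card : ℝ)) ∧
    ((∫ ω, ((Finset.univ.filter (fun j => ξ j ω)).card : ℝ)) ≤ (f + εout) * T) ∧
    (∀ δ' : ℝ, 0 < δ' → δ' ≤ 1 →
      ℙ {ω | δ' * (∫ ω', ((Finset.univ.filter (fun j => ξ j ω')).card : ℝ)) ≤
            |((Finset.univ.filter (fun j => ξ j ω)).card : ℝ) -
              ∫ ω', ((Finset.univ.filter (fun j => ξ j ω')).card : ℝ)|} ≤
        ENNReal.ofReal (2 * Real.exp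
          (-(∫ ω', ((Finset.univ.filter (fun j => ξ j ω')).card : ℝ)) * δ' ^ 2 / 3))) :=
  stmt_14_general n Cc T f ε hCc hCcn hT hf1 hε0 hε1 N hNlb hNub p hp ξ hmeas hindep hdist εout
    hεout
end

section
/- Strong-majority stability: In a phase of the Byzantine agreement algorithm, if at least an f = 1-o(1) fraction of honest nodes start the phase with the same vote m, and with high probability there exist n - o(n) honest nodes that each receive (1-o(1))·total good tokens with vote m, o(total) good tokens with the other vote, and o(total) bad tokens, then each of these n - o(n) nodes computes a tally exceeding 0.9 for m and hence ends the phase with vote m. Thus almost-everywhere agreement on m is maintained. -/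
/- **Statement 15.** Strong-majority stability: if each node `u` of a set `R` of honest
nodes receives at least `(1-ε)·total` good tokens with vote `m` and at most `ε'·total`
tokens with the other vote (good tokens with the other vote plus bad tokens), with
`ε, ε' = o(1)` (instantiated as `ε, ε' ≤ 0.01`), then every `u ∈ R` computes a tally
exceeding `0.9` for `m`, hence ends the phase with vote `m`; thus all nodes of `R` agree
on `m` and almost-everywhere agreement on `m` is maintained. -/
theorem stmt_15 (V : Type*) [Fintype V]
    (m : Bool) (T ε ε' : ℝ) (hT : 0 < T)
    (hε : 0 ≤ ε) (hε01 : ε ≤ 0.01) (hε' : 0 ≤ ε') (hε'01 : ε' ≤ 0.01)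
    (R : Finset V)
    (cm co : V → ℝ) (hcm0 : ∀ u, 0 ≤ cm u) (hco0 : ∀ u, 0 ≤ co u)
    (hcm : ∀ u ∈ R, (1 - ε) * T ≤ cm u)
    (hco : ∀ u ∈ R, co u ≤ ε' * T)
    (maj : V → Bool) (hmaj : ∀ u, maj u = if co u < cm u then m else !m)
    (tally : V → ℝ) (htally : ∀ u, tally u = max (cm u) (co u) / (cm u + co u))
    (coin vote : V → Bool)
    (hvote : ∀ u, vote u = if 0.9 < tally u then maj u else coin u) :
    (∀ u ∈ R, 0.9 < tally u ∧ maj u = m ∧ vote u = m) ∧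
    R.card ≤ (Finset.univ.filter (fun u => vote u = m)).card := by
  have key : ∀ u ∈ R, 0.9 < tally u ∧ maj u = m ∧ vote u = m := by
    intro u hu
    have h1 : (0.99 : ℝ) * T ≤ cm u := by
      have := hcm u hu; nlinarith
    have h2 : co u ≤ 0.01 * T := by
      have := hco u hu; nlinarith
    have hlt : co u < cm u := by nlinarith
    have hpos : 0 < cm u + co u := by nlinarith [hco0 u]
    have hmax : max (cm u) (co u) = cm u := max_eq_left hlt.le
    have ht : 0.9 < tally u := by
      rw [htally u, hmax, lt_div_iff₀ hpos]
      nlinarith [hco0 u]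
    refine ⟨ht, ?_, ?_⟩
    · rw [hmaj u, if_pos hlt]
    · rw [hvote u, if_pos ht, hmaj u, if_pos hlt]
  refine ⟨key, Finset.card_le_card ?_⟩
  intro u hu
  simp only [Finset.mem_filter, Finset.mem_univ, true_and]
  exact (key u hu).2.2
end

section
/- No two strong majorities: Suppose every node in a set R of n - o(n) honest nodes receives, among its total samples, a (f_m ± o(1)) fraction of good tokens for each vote m (where f_m is the true fraction of honest nodes holding m) plus o(total) bad tokens. If some honest node in R computes a tally strictly greater than 0.9 for vote m, then f_m ≥ 0.9 - o(1); consequently f_{1-m} ≤ 0.1 + o(1) < 0.9 - o(1), so no node in R can compute a tally greater than 0.9 for the other vote 1-m. Hence all nodes in R that detect a strong majority detect the same vote m. -/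
/- **Statement 16.** No two strong majorities: every node of `R` (of size `n - o(n)`)
observes, among its `T` samples, a `(f_m ± ε)` fraction for each vote `m` (good tokens
plus at most an `ε` fraction of bad tokens, folded into the `±ε` error), with `ε = o(1)`
instantiated as `ε ≤ 0.01`.  If some node of `R` computes a tally strictly greater than
`0.9` for vote `0`, then `f_0 ≥ 0.9 - o(1)`, hence `f_1 ≤ 0.1 + o(1)` and no node of `R`
can compute a tally greater than `0.9` for vote `1`: all nodes of `R` detecting a strong
majority detect the same vote. -/
theorem stmt_16 (V : Type*) (R : Set V)
    (f0 f1 T ε : ℝ) (hf0 : 0 ≤ f0) (hf1 : 0 ≤ f1) (hsum : f0 + f1 = 1)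
    (hT : 0 < T) (hε : 0 ≤ ε) (hε01 : ε ≤ 0.01)
    (c0 c1 : V → ℝ) (hc0nn : ∀ u, 0 ≤ c0 u) (hc1nn : ∀ u, 0 ≤ c1 u)
    (hpos : ∀ u ∈ R, 0 < c0 u + c1 u)
    (h0 : ∀ u ∈ R, (f0 - ε) * T ≤ c0 u ∧ c0 u ≤ (f0 + ε) * T)
    (h1 : ∀ u ∈ R, (f1 - ε) * T ≤ c1 u ∧ c1 u ≤ (f1 + ε) * T)
    (tally0 tally1 : V → ℝ)
    (ht0 : ∀ u, tally0 u = c0 u / (c0 u + c1 u))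
    (ht1 : ∀ u, tally1 u = c1 u / (c0 u + c1 u))
    (hdetect : ∃ u ∈ R, 0.9 < tally0 u) :
    0.9 - 2 * ε ≤ f0 ∧ f1 ≤ 0.1 + 2 * ε ∧ ∀ v ∈ R, tally1 v ≤ 0.9 := by
  obtain ⟨u, hu, hu9⟩ := hdetect
  rw [ht0 u] at hu9
  have hden : 0 < c0 u + c1 u := hpos u hu
  have hc0 : 0.9 * (c0 u + c1 u) < c0 u := by
    have := (lt_div_iff₀ hden).mp hu9
    linarith
  obtain ⟨h0l, h0u⟩ := h0 u hu
  obtain ⟨h1l, h1u⟩ := h1 u hu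
  have hf1b : f1 ≤ 0.1 + 2 * ε := by nlinarith [hT.le]
  refine ⟨by linarith, hf1b, ?_⟩
  intro v hv
  rw [ht1 v]
  have hdenv : 0 < c0 v + c1 v := hpos v hv
  rw [div_le_iff₀ hdenv]
  obtain ⟨h0lv, h0uv⟩ := h0 v hv
  obtain ⟨h1lv, h1uv⟩ := h1 v hv
  nlinarith [hT.le]
end
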